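/- arXiv:1905.05312 — 3 statements merged into one kernel-verified Lean document; each statement's English description precedes it below -/
import Mathlib

section
/- For any graph G, the sum over all vertices x of the number of edges spanned by the non-neighborhood of x equals mn + 3t - Σ_v d(v)², where m is the number of edges, t the number of triangles, and d(v) the degree of v. -/
open Finset SimpleGraph

/-!
Write `N x` for the neighbourhood of `x` and `e(S)` for the number of edges inside `S`.
Splitting both ends of every ordered adjacent pair between `N x` and its complement gives,
by inclusion–exclusion, `e((N x)ᶜ) = m - ∑_{a ∈ N x} d(a) + e(N x)`. Summed over `x`, the middle
term becomes `∑_v d(v)²`, and `e(N x)` is the number of triangles through `x`, which sums to `3t`.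
-/

theorem Finset.sum_sum_compl_add_two_nsmul_of_symm {α M : Type*} [Fintype α] [DecidableEq α]
    [AddCommMonoid M] {f : α → α → M} (hf : ∀ a b, f a b = f b a) (s : Finset α) :
    ∑ a ∈ sᶜ, ∑ b ∈ sᶜ, f a b + 2 • ∑ a ∈ s, ∑ b, f a b
      = ∑ a, ∑ b, f a b + ∑ a ∈ s, ∑ b ∈ s, f a b := by
  have hcross : ∑ a ∈ sᶜ, ∑ b ∈ s, f a b = ∑ a ∈ s, ∑ b ∈ sᶜ, f a b := by
    rw [sum_comm]
    simp only [hf]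
  simp only [← sum_add_sum_compl s (fun b => f _ b), sum_add_distrib,
    ← sum_add_sum_compl s (fun a => ∑ b ∈ s, f a b + ∑ b ∈ sᶜ, f a b), hcross, two_nsmul]
  abel

namespace SimpleGraph

variable {V : Type*} [Fintype V] (G : SimpleGraph V) [DecidableRel G.Adj]

theorem sum_sum_neighborFinset {M : Type*} [AddCommMonoid M] (f : V → M) :
    ∑ x, ∑ a ∈ G.neighborFinset x, f a = ∑ a, G.degree a • f a := by
  have h := sum_sum_bipartiteAbove_eq_sum_sum_bipartiteBelow G.Adj (s := univ) (t := univ)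
    (fun _ a => f a)
  simp only [bipartiteAbove, bipartiteBelow, sum_const, G.adj_comm _ (_ : V)] at h
  simpa only [← card_neighborFinset_eq_degree, neighborFinset_eq_filter] using h

variable [DecidableEq V]

theorem two_mul_card_edgeFinset_inter_sym2 (s : Finset V) :
    2 * #(G.edgeFinset ∩ s.sym2) = ∑ a ∈ s, #{b ∈ s | G.Adj a b} := by
  rw [← filter_edgeFinset_toFinset_subset, card_filter_edgeFinset_toFinset_subset,
    ← sum_degrees_eq_twice_card_edges, ← sum_coe_sort s]
  refine sum_congr rfl fun v _ => ?_
  have h := congrArg card (map_neighborFinset_induce (G := G) (s := (s : Set V)) v)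
  rw [card_map, card_neighborFinset_eq_degree, toFinset_coe] at h
  convert h using 2
  ext b
  simp [and_comm]

theorem sum_card_filter_adj_compl_add (s : Finset V) :
    ∑ a ∈ sᶜ, #{b ∈ sᶜ | G.Adj a b} + 2 * ∑ a ∈ s, G.degree a
      = 2 * #G.edgeFinset + ∑ a ∈ s, #{b ∈ s | G.Adj a b} := by
  have hdeg : ∀ a, G.degree a = ∑ b, if G.Adj a b then 1 else 0 := fun a => by
    rw [← card_neighborFinset_eq_degree, neighborFinset_eq_filter, card_filter]
  rw [← sum_degrees_eq_twice_card_edges]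
  simp only [hdeg, card_filter, ← smul_eq_mul]
  exact sum_sum_compl_add_two_nsmul_of_symm (fun a b => by simp only [G.adj_comm]) s

theorem card_edgeFinset_inter_sym2_neighborFinset (x : V) :
    #(G.edgeFinset ∩ (G.neighborFinset x).sym2) = #{s ∈ G.cliqueFinset 3 | x ∈ s} := by
  have hx : ∀ e ∈ (G.neighborFinset x).sym2, x ∉ e.toFinset := fun e he hxe =>
    G.loopless.irrefl x (by simpa using mem_sym2_iff.1 he x (Sym2.mem_toFinset.1 hxe))
  refine card_bij (fun e _ => insert x e.toFinset) ?_ ?_ ?_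
  · intro e he
    induction e using Sym2.ind with
    | _ a b =>
      simp only [mem_inter, mem_edgeFinset, mem_edgeSet, mk_mem_sym2_iff,
        mem_neighborFinset] at he
      simp only [mem_filter, mem_cliqueFinset_iff, Sym2.toFinset_mk_eq, is3Clique_triple_iff,
        mem_insert_self, and_true]
      exact ⟨he.2.1, he.2.2, he.1⟩
  · intro e₁ he₁ e₂ he₂ h
    have h' := congrArg (·.erase x) h
    simp only [erase_insert (hx _ (mem_inter.1 he₁).2),
      erase_insert (hx _ (mem_inter.1 he₂).2)] at h'
    exact Sym2.ext fun y => by rw [← Sym2.mem_toFinset, h', Sym2.mem_toFinset]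
  · intro s hs
    obtain ⟨hs, hxs⟩ := mem_filter.1 hs
    have hs := mem_cliqueFinset_iff.1 hs
    obtain ⟨a, b, hab, hsab⟩ := card_eq_two.1 (hs.erase_of_mem hxs).card_eq
    have ha : a ∈ s.erase x := by simp [hsab]
    have hb : b ∈ s.erase x := by simp [hsab]
    refine ⟨s(a, b), ?_, by rw [Sym2.toFinset_mk_eq, ← hsab, insert_erase hxs]⟩
    simp only [mem_inter, mem_edgeFinset, mem_edgeSet, mk_mem_sym2_iff, mem_neighborFinset]
    exact ⟨hs.isClique (mem_of_mem_erase ha) (mem_of_mem_erase hb) hab,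
      hs.isClique hxs (mem_of_mem_erase ha) (ne_of_mem_erase ha).symm,
      hs.isClique hxs (mem_of_mem_erase hb) (ne_of_mem_erase hb).symm⟩

theorem sum_card_filter_mem_cliqueFinset (n : ℕ) :
    ∑ x, #{s ∈ G.cliqueFinset n | x ∈ s} = n * #(G.cliqueFinset n) := by
  have h := sum_card_bipartiteAbove_eq_sum_card_bipartiteBelow (fun x (s : Finset V) => x ∈ s)
    (s := univ) (t := G.cliqueFinset n)
  simp only [bipartiteAbove, bipartiteBelow, filter_univ_mem] at h
  rw [h, sum_const_nat fun s hs => (mem_cliqueFinset_iff.1 hs).card_eq, mul_comm]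

theorem sum_card_edgeFinset_inter_sym2_compl_neighborFinset_add :
    ∑ x, #(G.edgeFinset ∩ (G.neighborFinset x)ᶜ.sym2) + ∑ v, G.degree v ^ 2
      = #G.edgeFinset * Fintype.card V + 3 * #(G.cliqueFinset 3) := by
  have hx : ∀ x, 2 * #(G.edgeFinset ∩ (G.neighborFinset x)ᶜ.sym2)
      + 2 * ∑ a ∈ G.neighborFinset x, G.degree a
      = 2 * #G.edgeFinset + 2 * #(G.edgeFinset ∩ (G.neighborFinset x).sym2) := fun x => by
    rw [two_mul_card_edgeFinset_inter_sym2, two_mul_card_edgeFinset_inter_sym2]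
    exact G.sum_card_filter_adj_compl_add _
  have hsum := sum_congr rfl fun x (_ : x ∈ univ) => hx x
  simp only [sum_add_distrib, ← mul_sum, sum_sum_neighborFinset, smul_eq_mul, ← sq,
    card_edgeFinset_inter_sym2_neighborFinset, sum_card_filter_mem_cliqueFinset, sum_const,
    card_univ] at hsum
  linarith

end SimpleGraph

/-- For any graph `G` with `n` vertices, `m` edges and `t` triangles, the sum over all
vertices `x` of the number of edges spanned by the non-neighborhood of `x` (the set of
vertices, including `x` itself, not adjacent to `x`) equals `mn + 3t - Σ_v d(v)²`. -/
theorem sum_nonneighborhood_edges {V : Type*} [Fintype V] [DecidableEq V]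
    (G : SimpleGraph V) [DecidableRel G.Adj] (n m t : ℕ) (hn : Fintype.card V = n)
    (hm : G.edgeFinset.card = m) (ht : (G.cliqueFinset 3).card = t) :
    (∑ x : V, ((G.edgeFinset ∩ ((G.neighborFinset x)ᶜ).sym2).card : ℝ))
      = m * n + 3 * t - ∑ v : V, (G.degree v : ℝ) ^ 2 := by
  subst hn hm ht
  rw [eq_sub_iff_add_eq]
  exact_mod_cast G.sum_card_edgeFinset_inter_sym2_compl_neighborFinset_add
end

section
/- Let ε > 0 and let G be a graph on n vertices with at least n²/4 edges, at least one triangle, and book number at most (1/6 + ε³)n. Then the number of vertices v with |d(v) - n/2| ≥ εn is at most εn. -/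
open Finset SimpleGraph

/-!
Let `c(xy)` be the codegree of an edge and `B ≥ c` a uniform bound. Give the edge `xy` the
weight `w(xy) = B (d x + d y - n) / c(xy)`; note `d x + d y - n ≤ c(xy)`. Summing `c(xy) w(xy)`
over ordered edges is summing over ordered triangles, and on a triangle the three weights add
up to at most `6B - n`, since `d x + d y + d z ≤ n + c(xy) + c(yz) + c(xz)`. As there are at
most `2Bm` ordered triangles, this gives `Σ d² - nm ≤ (2B - n/3) m = 2ε³nm` for
`B = (1/6 + ε³) n`. With `n²/4 ≤ m ≤ n²/2` the variance `Σ (d v - n/2)²` is at most `ε³n³`,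
and Chebyshev's inequality bounds the number of vertices with `|d v - n/2| ≥ εn` by `εn`.
-/

theorem Finset.card_add_card_add_card_le {α : Type*} [DecidableEq α] (s t u : Finset α) :
    #s + #t + #u ≤ #(s ∪ t ∪ u) + #(s ∩ t) + #(t ∩ u) + #(s ∩ u) := by
  have hst := card_union_add_card_inter s t
  have hstu := card_union_add_card_inter (s ∪ t) u
  have hcap : #((s ∪ t) ∩ u) ≤ #(s ∩ u) + #(t ∩ u) := by
    rw [union_inter_distrib_right]; exact card_union_le _ _
  omega

theorem Finset.card_filter_le_abs_mul_sq_le_sum_sq {ι : Type*} (s : Finset ι) (f : ι → ℝ)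
    {a : ℝ} (ha : 0 ≤ a) : #{i ∈ s | a ≤ |f i|} * a ^ 2 ≤ ∑ i ∈ s, f i ^ 2 :=
  calc #{i ∈ s | a ≤ |f i|} * a ^ 2 ≤ ∑ i ∈ s with a ≤ |f i|, f i ^ 2 := by
        rw [← nsmul_eq_mul]
        refine card_nsmul_le_sum _ _ _ fun i hi ↦ ?_
        rw [← sq_abs (f i)]
        exact pow_le_pow_left₀ ha (mem_filter.1 hi).2 2
    _ ≤ ∑ i ∈ s, f i ^ 2 :=
        sum_le_sum_of_subset_of_nonneg (filter_subset _ _) fun i _ _ ↦ sq_nonneg _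

theorem mul_div_le_add_sub {B s c : ℝ} (hc : 0 < c) (hcB : c ≤ B) (hsc : s ≤ c) :
    B * s / c ≤ B + (s - c) := by
  rw [div_le_iff₀ hc]
  nlinarith

namespace SimpleGraph

variable {V : Type*} [Fintype V] (G : SimpleGraph V) [DecidableRel G.Adj]

def orderedTriangles : Finset (V × V × V) :=
  {t | G.Adj t.1 t.2.1 ∧ G.Adj t.2.1 t.2.2 ∧ G.Adj t.1 t.2.2}

theorem sum_sum_neighborFinset_comm {M : Type*} [AddCommMonoid M] (f : V → V → M) :
    ∑ x, ∑ y ∈ G.neighborFinset x, f x y = ∑ y, ∑ x ∈ G.neighborFinset y, f x y :=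
  sum_comm' fun x y ↦ by simp [adj_comm]

theorem sum_orderedTriangles_snd_thd {M : Type*} [AddCommMonoid M] (f : V → V → M) :
    ∑ t ∈ G.orderedTriangles, f t.2.1 t.2.2 = ∑ t ∈ G.orderedTriangles, f t.1 t.2.1 :=
  sum_nbij' (fun t ↦ (t.2.1, t.2.2, t.1)) (fun t ↦ (t.2.2, t.1, t.2.1))
    (fun t ht ↦ by simp_all [orderedTriangles, adj_comm])
    (fun t ht ↦ by simp_all [orderedTriangles, adj_comm]) (fun _ _ ↦ rfl) (fun _ _ ↦ rfl)
    (fun _ _ ↦ rfl)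

theorem sum_orderedTriangles_fst_thd {M : Type*} [AddCommMonoid M] (f : V → V → M) :
    ∑ t ∈ G.orderedTriangles, f t.1 t.2.2 = ∑ t ∈ G.orderedTriangles, f t.1 t.2.1 :=
  sum_nbij' (fun t ↦ (t.1, t.2.2, t.2.1)) (fun t ↦ (t.1, t.2.2, t.2.1))
    (fun t ht ↦ by simp_all [orderedTriangles, adj_comm])
    (fun t ht ↦ by simp_all [orderedTriangles, adj_comm]) (fun _ _ ↦ rfl) (fun _ _ ↦ rfl)
    (fun _ _ ↦ rfl)

theorem sum_degree_eq_two_mul_card_edgeFinset :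
    ∑ v, (G.degree v : ℝ) = 2 * #G.edgeFinset := by
  exact_mod_cast G.sum_degrees_eq_twice_card_edges

theorem sum_sum_neighborFinset_degree_add_degree :
    ∑ x, ∑ y ∈ G.neighborFinset x, ((G.degree x : ℝ) + G.degree y - Fintype.card V)
      = 2 * (∑ v, (G.degree v : ℝ) ^ 2 - Fintype.card V * #G.edgeFinset) := by
  simp only [sum_sub_distrib, sum_add_distrib]
  rw [sum_sum_neighborFinset_comm G fun _ y ↦ (G.degree y : ℝ)]
  simp only [sum_const, card_neighborFinset_eq_degree, nsmul_eq_mul, ← sum_mul, sq,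
    sum_degree_eq_two_mul_card_edgeFinset]
  ring

theorem sum_sq_degree_sub_half_card :
    ∑ v, ((G.degree v : ℝ) - Fintype.card V / 2) ^ 2
      = (∑ v, (G.degree v : ℝ) ^ 2 - Fintype.card V * #G.edgeFinset)
        - Fintype.card V * (#G.edgeFinset - (Fintype.card V : ℝ) ^ 2 / 4) := by
  simp only [sub_sq, sum_add_distrib, sum_sub_distrib, ← sum_mul, ← mul_sum, sum_const,
    card_univ, nsmul_eq_mul, sum_degree_eq_two_mul_card_edgeFinset]
  ring

variable [DecidableEq V]

def codegree (u v : V) : ℕ := #(G.neighborFinset u ∩ G.neighborFinset v)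

theorem degree_add_degree_le (u v : V) :
    G.degree u + G.degree v ≤ Fintype.card V + G.codegree u v := by
  rw [← card_neighborFinset_eq_degree, ← card_neighborFinset_eq_degree, codegree,
    ← card_union_add_card_inter]
  grw [card_le_univ (_ ∪ _)]

theorem degree_add_degree_add_degree_le (x y z : V) :
    G.degree x + G.degree y + G.degree z
      ≤ Fintype.card V + G.codegree x y + G.codegree y z + G.codegree x z := by
  simp only [← card_neighborFinset_eq_degree, codegree]
  grw [card_add_card_add_card_le, card_le_univ (_ ∪ _ ∪ _)]

theorem codegree_pos_of_adj_of_adj {x y z : V} (hxz : G.Adj x z) (hyz : G.Adj y z) :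
    0 < G.codegree x y :=
  card_pos.2 ⟨z, by simp [hxz, hyz]⟩

theorem sum_orderedTriangles {M : Type*} [AddCommMonoid M] (g : V × V × V → M) :
    ∑ t ∈ G.orderedTriangles, g t = ∑ x, ∑ y ∈ G.neighborFinset x,
      ∑ z ∈ G.neighborFinset x ∩ G.neighborFinset y, g (x, y, z) := by
  simp only [orderedTriangles, sum_filter, Fintype.sum_prod_type]
  refine sum_congr rfl fun x _ ↦ ?_
  simp only [neighborFinset_eq_filter, sum_filter, ← filter_and, ite_and]
  refine sum_congr rfl fun y _ ↦ ?_
  by_cases hxy : G.Adj x y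
  · simp only [hxy, if_true]
    refine sum_congr rfl fun z _ ↦ ?_
    by_cases hxz : G.Adj x z <;> simp [hxz]
  · simp [hxy]

theorem sum_orderedTriangles_fst_snd {M : Type*} [AddCommMonoid M] (f : V → V → M) :
    ∑ t ∈ G.orderedTriangles, f t.1 t.2.1
      = ∑ x, ∑ y ∈ G.neighborFinset x, G.codegree x y • f x y := by
  simp only [sum_orderedTriangles, sum_const, codegree]

theorem card_orderedTriangles_le {B : ℝ}
    (hB : ∀ u v, G.Adj u v → (G.codegree u v : ℝ) ≤ B) :
    (#G.orderedTriangles : ℝ) ≤ 2 * B * #G.edgeFinset := by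
  calc (#G.orderedTriangles : ℝ) = ∑ t ∈ G.orderedTriangles, (1 : ℝ) := by simp
    _ = ∑ x, ∑ y ∈ G.neighborFinset x, (G.codegree x y : ℝ) := by
      simp [sum_orderedTriangles_fst_snd G fun _ _ ↦ (1 : ℝ)]
    _ ≤ ∑ x, ∑ y ∈ G.neighborFinset x, B :=
      sum_le_sum fun x _ ↦ sum_le_sum fun y hy ↦ hB x y ((mem_neighborFinset G x y).1 hy)
    _ = 2 * B * #G.edgeFinset := by
      simp only [sum_const, card_neighborFinset_eq_degree, nsmul_eq_mul, ← sum_mul,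
        sum_degree_eq_two_mul_card_edgeFinset]
      ring

noncomputable def edgeWeight (B : ℝ) (x y : V) : ℝ :=
  B * (G.degree x + G.degree y - Fintype.card V) / G.codegree x y

theorem degree_add_degree_sub_card_le_codegree (x y : V) :
    (G.degree x : ℝ) + G.degree y - Fintype.card V ≤ G.codegree x y := by
  rw [sub_le_iff_le_add']
  exact_mod_cast G.degree_add_degree_le x y

theorem mul_le_codegree_mul_edgeWeight {B : ℝ} (hB0 : 0 ≤ B) (x y : V) :
    B * ((G.degree x : ℝ) + G.degree y - Fintype.card V)
      ≤ G.codegree x y * G.edgeWeight B x y := by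
  rcases (Nat.zero_le (G.codegree x y)).eq_or_lt with h | h
  · rw [← h, Nat.cast_zero, zero_mul]
    exact mul_nonpos_of_nonneg_of_nonpos hB0
      (by simpa [← h] using G.degree_add_degree_sub_card_le_codegree x y)
  · rw [edgeWeight, mul_div_cancel₀ _ (by positivity)]

theorem edgeWeight_add_edgeWeight_add_edgeWeight_le {B : ℝ}
    (hB : ∀ u v, G.Adj u v → (G.codegree u v : ℝ) ≤ B) {x y z : V}
    (hxy : G.Adj x y) (hyz : G.Adj y z) (hxz : G.Adj x z) :
    G.edgeWeight B x y + G.edgeWeight B y z + G.edgeWeight B x z ≤ 6 * B - Fintype.card V := by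
  have hunion : (G.degree x + G.degree y + G.degree z : ℝ)
      ≤ Fintype.card V + G.codegree x y + G.codegree y z + G.codegree x z := by
    exact_mod_cast G.degree_add_degree_add_degree_le x y z
  have h₁ := mul_div_le_add_sub (by exact_mod_cast G.codegree_pos_of_adj_of_adj hxz hyz)
    (hB x y hxy) (G.degree_add_degree_sub_card_le_codegree x y)
  have h₂ := mul_div_le_add_sub (by exact_mod_cast G.codegree_pos_of_adj_of_adj hxy.symm hxz.symm)
    (hB y z hyz) (G.degree_add_degree_sub_card_le_codegree y z)
  have h₃ := mul_div_le_add_sub (by exact_mod_cast G.codegree_pos_of_adj_of_adj hxy hyz.symm)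
    (hB x z hxz) (G.degree_add_degree_sub_card_le_codegree x z)
  simp only [edgeWeight]
  linarith [hB x y hxy, hB y z hyz, hB x z hxz]

/-- Since `#G.orderedTriangles = 6 t(G)`, this is `B (Σ d² - nm) ≤ (6B - n) t(G)` for any
bound `B` on the book number. -/
theorem bollobas_nikiforov {B : ℝ} (hB0 : 0 ≤ B)
    (hB : ∀ u v, G.Adj u v → (G.codegree u v : ℝ) ≤ B) :
    6 * B * (∑ v, (G.degree v : ℝ) ^ 2 - Fintype.card V * #G.edgeFinset)
      ≤ (6 * B - Fintype.card V) * #G.orderedTriangles := by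
  set w := G.edgeWeight B
  calc _ = 3 * ∑ x, ∑ y ∈ G.neighborFinset x,
          B * ((G.degree x : ℝ) + G.degree y - Fintype.card V) := by
        simp only [← mul_sum, sum_sum_neighborFinset_degree_add_degree]
        ring
    _ ≤ 3 * ∑ x, ∑ y ∈ G.neighborFinset x, G.codegree x y * w x y := by
        gcongr 3 * ∑ x, ∑ y ∈ _, ?_ with x _ y _
        exact G.mul_le_codegree_mul_edgeWeight hB0 x y
    _ = ∑ t ∈ G.orderedTriangles, (w t.1 t.2.1 + w t.2.1 t.2.2 + w t.1 t.2.2) := by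
      simp only [sum_add_distrib, sum_orderedTriangles_snd_thd, sum_orderedTriangles_fst_thd,
        sum_orderedTriangles_fst_snd, nsmul_eq_mul]
      ring
    _ ≤ ∑ t ∈ G.orderedTriangles, (6 * B - Fintype.card V) := by
      refine sum_le_sum fun t ht ↦ ?_
      obtain ⟨hxy, hyz, hxz⟩ := (mem_filter.1 ht).2
      exact G.edgeWeight_add_edgeWeight_add_edgeWeight_le hB hxy hyz hxz
    _ = (6 * B - Fintype.card V) * #G.orderedTriangles := by
      rw [sum_const, nsmul_eq_mul, mul_comm]

theorem sum_sq_degree_sub_le {B : ℝ} (hB0 : 0 < B) (hn : (Fintype.card V : ℝ) ≤ 6 * B)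
    (hB : ∀ u v, G.Adj u v → (G.codegree u v : ℝ) ≤ B) :
    3 * (∑ v, (G.degree v : ℝ) ^ 2 - Fintype.card V * #G.edgeFinset)
      ≤ (6 * B - Fintype.card V) * #G.edgeFinset := by
  refine le_of_mul_le_mul_left ?_ (by positivity : 0 < 2 * B)
  calc _ = 6 * B * (∑ v, (G.degree v : ℝ) ^ 2 - Fintype.card V * #G.edgeFinset) := by ring
    _ ≤ (6 * B - Fintype.card V) * #G.orderedTriangles := G.bollobas_nikiforov hB0.le hB
    _ ≤ (6 * B - Fintype.card V) * (2 * B * #G.edgeFinset) := by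
      gcongr
      exact G.card_orderedTriangles_le hB
    _ = _ := by ring

end SimpleGraph

theorem almost_regular_general {V : Type*} [Fintype V] [DecidableEq V] (G : SimpleGraph V)
    [DecidableRel G.Adj] (n : ℕ) (ε : ℝ) (hε : 0 < ε) (hn : Fintype.card V = n)
    (hm : (n : ℝ) ^ 2 / 4 ≤ G.edgeFinset.card)
    (hbook : ∀ u v : V, G.Adj u v →
      ((G.neighborFinset u ∩ G.neighborFinset v).card : ℝ) ≤ (1 / 6 + ε ^ 3) * n) :
    ((Finset.univ.filter fun v : V => ε * n ≤ |(G.degree v : ℝ) - n / 2|).card : ℝ)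
      ≤ ε * n := by
  rcases n.eq_zero_or_pos with rfl | hn0
  · simp [Fintype.card_eq_zero_iff.1 hn]
  subst hn
  have hpos : (0 : ℝ) < Fintype.card V := by exact_mod_cast hn0
  have hsq := G.sum_sq_degree_sub_le (by positivity)
    (by nlinarith [mul_pos (pow_pos hε 3) hpos]) hbook
  have hm_le : (#G.edgeFinset : ℝ) ≤ (Fintype.card V : ℝ) ^ 2 / 2 := by
    have := (Nat.cast_le (α := ℝ)).2 G.card_edgeFinset_le_card_choose_two
    rw [Nat.cast_choose_two] at this
    nlinarith
  have hvar :
      ∑ v, ((G.degree v : ℝ) - Fintype.card V / 2) ^ 2 ≤ (ε * Fintype.card V) ^ 3 := by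
    have hS : ∑ v, (G.degree v : ℝ) ^ 2 - Fintype.card V * #G.edgeFinset
        ≤ (ε * Fintype.card V) ^ 3 := by
      nlinarith [mul_nonneg (mul_pos (pow_pos hε 3) hpos).le (sub_nonneg.2 hm_le)]
    rw [G.sum_sq_degree_sub_half_card]
    nlinarith [mul_nonneg hpos.le (sub_nonneg.2 hm)]
  have hcheb := card_filter_le_abs_mul_sq_le_sum_sq univ
    (fun v ↦ (G.degree v : ℝ) - Fintype.card V / 2) (by positivity : 0 ≤ ε * Fintype.card V)
  refine le_of_mul_le_mul_right ?_ (by positivity : 0 < (ε * Fintype.card V) ^ 2)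
  linarith [show (ε * Fintype.card V) ^ 3 = ε * Fintype.card V * (ε * Fintype.card V) ^ 2 by
    ring]

/-- Let `ε > 0` and let `G` be a graph on `n` vertices with at least `n²/4` edges, at
least one triangle, and book number at most `(1/6 + ε³)n`. Then the number of vertices
`v` with `|d(v) - n/2| ≥ εn` is at most `εn`. -/
theorem almost_regular {V : Type*} [Fintype V] [DecidableEq V] (G : SimpleGraph V)
    [DecidableRel G.Adj] (n : ℕ) (ε : ℝ) (hε : 0 < ε) (hn : Fintype.card V = n)
    (hm : (n : ℝ) ^ 2 / 4 ≤ G.edgeFinset.card)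
    (htri : (G.cliqueFinset 3).Nonempty)
    (hbook : ∀ u v : V, G.Adj u v →
      ((G.neighborFinset u ∩ G.neighborFinset v).card : ℝ) ≤ (1 / 6 + ε ^ 3) * n) :
    ((Finset.univ.filter fun v : V => ε * n ≤ |(G.degree v : ℝ) - n / 2|).card : ℝ)
      ≤ ε * n :=
  almost_regular_general G n ε hε hn hm hbook
end

section
/- Let G be a graph whose degrees all satisfy |d(u) - n/2| ≤ εn, where n is the number of vertices. Then for every vertex v, |e(N(v)) - e(M(v))| ≤ Cεn², for an absolute constant C, where M(v) is the complement of N(v) ∪ {v} together with v (i.e., the non-neighbors of v including v itself). -/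
open Finset SimpleGraph

/-!
Counting endpoints edge by edge, an edge with both ends in `S` contributes 2 to
`∑_{x ∈ S} d(x)`, one with both ends outside contributes 2 to `∑_{x ∉ S} d(x)`, and a crossing
edge 1 to each, so `2 (e(S) - e(Sᶜ)) = ∑_{x ∈ S} d(x) - ∑_{x ∉ S} d(x)`. If every degree is
within `εn` of `n/2`, the right side is within `nεn` of `(|S| - |Sᶜ|) n/2`; for `S = N(v)` we
have `|S| - |Sᶜ| = 2(d(v) - n/2)`, so the whole difference is at most `2εn²` and `C = 1` works.
-/

theorem Sym2.card_filter_mem_add_ite_mem_sym2_compl {V : Type*} [Fintype V] [DecidableEq V]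
    {e : Sym2 V} (he : ¬e.IsDiag) (S : Finset V) :
    #{x ∈ S | x ∈ e} + (if e ∈ Sᶜ.sym2 then 2 else 0)
      = #{x ∈ Sᶜ | x ∈ e} + (if e ∈ S.sym2 then 2 else 0) := by
  induction e using Sym2.ind with
  | _ a b =>
  have hab : a ≠ b := he
  by_cases ha : a ∈ S <;> by_cases hb : b ∈ S <;>
    simp [ha, hb, filter_or, filter_eq', hab, card_insert_of_notMem]

theorem Finset.abs_sum_sub_card_mul_le {ι R : Type*}
    [CommRing R] [LinearOrder R] [IsOrderedRing R]
    (s : Finset ι) (f : ι → R) {c δ : R} (h : ∀ i ∈ s, |f i - c| ≤ δ) :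
    |∑ i ∈ s, f i - #s * c| ≤ #s * δ :=
  calc |∑ i ∈ s, f i - #s * c| = |∑ i ∈ s, (f i - c)| := by
        rw [sum_sub_distrib, sum_const, nsmul_eq_mul]
    _ ≤ ∑ i ∈ s, |f i - c| := abs_sum_le_sum_abs _ _
    _ ≤ #s * δ := by simpa using sum_le_card_nsmul s _ δ h

namespace SimpleGraph

variable {V : Type*} [Fintype V] [DecidableEq V] (G : SimpleGraph V) [DecidableRel G.Adj]

theorem sum_degree_eq_sum_card_filter_mem (S : Finset V) :
    ∑ x ∈ S, G.degree x = ∑ e ∈ G.edgeFinset, #{x ∈ S | x ∈ e} := by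
  simp_rw [← card_incidenceFinset_eq_degree, incidenceFinset_eq_filter]
  exact sum_card_bipartiteAbove_eq_sum_card_bipartiteBelow (fun x e ↦ x ∈ e)

theorem two_mul_card_edgeFinset_inter_sym2_s14 (S : Finset V) :
    2 * #(G.edgeFinset ∩ S.sym2) = ∑ e ∈ G.edgeFinset, if e ∈ S.sym2 then 2 else 0 := by
  rw [← filter_mem_eq_inter, card_filter, mul_sum]
  simp only [mul_ite, mul_one, mul_zero]

theorem sum_degree_add_two_mul_card_edges_compl (S : Finset V) :
    ∑ x ∈ S, G.degree x + 2 * #(G.edgeFinset ∩ Sᶜ.sym2)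
      = ∑ x ∈ Sᶜ, G.degree x + 2 * #(G.edgeFinset ∩ S.sym2) := by
  simp only [sum_degree_eq_sum_card_filter_mem, two_mul_card_edgeFinset_inter_sym2_s14,
    ← sum_add_distrib]
  refine sum_congr rfl fun e he ↦ ?_
  exact Sym2.card_filter_mem_add_ite_mem_sym2_compl
    (G.not_isDiag_of_mem_edgeSet (mem_edgeFinset.mp he)) S

theorem abs_two_mul_card_edges_sub_compl_le {c δ : ℝ} (hdeg : ∀ u, |(G.degree u : ℝ) - c| ≤ δ)
    (S : Finset V) :
    |2 * ((#(G.edgeFinset ∩ S.sym2) : ℝ) - #(G.edgeFinset ∩ Sᶜ.sym2)) - (#S - #Sᶜ) * c|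
      ≤ Fintype.card V * δ := by
  have hbalance : ∑ x ∈ S, (G.degree x : ℝ) + 2 * #(G.edgeFinset ∩ Sᶜ.sym2)
      = ∑ x ∈ Sᶜ, (G.degree x : ℝ) + 2 * #(G.edgeFinset ∩ S.sym2) := by
    exact_mod_cast G.sum_degree_add_two_mul_card_edges_compl S
  have hS := S.abs_sum_sub_card_mul_le (fun x ↦ (G.degree x : ℝ)) fun x _ ↦ hdeg x
  have hSc := Sᶜ.abs_sum_sub_card_mul_le (fun x ↦ (G.degree x : ℝ)) fun x _ ↦ hdeg x
  calc _ = |(∑ x ∈ S, (G.degree x : ℝ) - #S * c)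
          - (∑ x ∈ Sᶜ, (G.degree x : ℝ) - #Sᶜ * c)| := by
        congr 1; linarith
    _ ≤ #S * δ + #Sᶜ * δ := (abs_sub _ _).trans (add_le_add hS hSc)
    _ = Fintype.card V * δ := by rw [← add_mul, ← Nat.cast_add, card_add_card_compl]

end SimpleGraph

/-- There is an absolute constant `C > 0` such that for any graph `G` on `n` vertices
all of whose degrees satisfy `|d(u) - n/2| ≤ εn`, and any vertex `v`, the number of
edges inside `N(v)` and the number of edges inside `M(v)` (the non-neighbors of `v`,
including `v` itself) differ by at most `Cεn²`. -/
theorem edges_neighborhood_balance :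
    ∃ C : ℝ, 0 < C ∧
      ∀ (V : Type) [Fintype V] [DecidableEq V] (G : SimpleGraph V) [DecidableRel G.Adj]
        (n : ℕ) (ε : ℝ), Fintype.card V = n →
        (∀ u : V, |(G.degree u : ℝ) - n / 2| ≤ ε * n) →
        ∀ v : V,
          |((G.edgeFinset ∩ (G.neighborFinset v).sym2).card : ℝ)
            - ((G.edgeFinset ∩ ((G.neighborFinset v)ᶜ).sym2).card : ℝ)|
            ≤ C * ε * n ^ 2 := by
  refine ⟨1, one_pos, fun V _ _ G _ n ε hn hdeg v ↦ ?_⟩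
  set S := G.neighborFinset v
  have hbalance := G.abs_two_mul_card_edges_sub_compl_le hdeg S
  rw [hn] at hbalance
  set D : ℝ := #(G.edgeFinset ∩ S.sym2) - #(G.edgeFinset ∩ Sᶜ.sym2)
  have hX : |(#S - #Sᶜ : ℝ) * (n / 2)| ≤ ε * n * n := by
    have hsum : (#S : ℝ) + #Sᶜ = n := by rw [← Nat.cast_add, card_add_card_compl, hn]
    have hdiff : (#S : ℝ) - #Sᶜ = 2 * (G.degree v - n / 2) := by
      rw [← card_neighborFinset_eq_degree]; linarith
    calc _ = |(G.degree v : ℝ) - n / 2| * n := by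
          rw [hdiff, abs_mul, abs_mul, abs_two, abs_of_nonneg (by positivity : (0 : ℝ) ≤ n / 2)]
          ring
      _ ≤ ε * n * n := by gcongr; exact hdeg v
  set X : ℝ := (#S - #Sᶜ) * (n / 2)
  calc |D| = |2 * D - X + X| / 2 := by rw [sub_add_cancel, abs_mul, abs_two]; ring
    _ ≤ (|2 * D - X| + |X|) / 2 := by gcongr; exact abs_add_le _ _
    _ ≤ (n * (ε * n) + ε * n * n) / 2 := by gcongr
    _ = 1 * ε * n ^ 2 := by ring
end
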